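/- Let D be a finite-dimensional real graded division algebra, with degree-preserving involution φ_0 of the second kind on its center whenever Z(D) ≠ ℝ, such that Z(D) is ℝ, ℂ, or ℝ×ℝ. If Z(D) is nontrivially graded with support {e, f} (f the distinguished element of order 2), then f is not a square in T, and consequently T is an elementary abelian 2-group; the same conclusion holds if Z(D) = ℝ is trivially graded. -/

import Mathlib

variable {G : Type*} [CommGroup G] [DecidableEq G] {D : Type*} [Ring D] [Algebra ℝ D]

/-- A real graded division algebra. -/
def IsGDA (comp : G → Submodule ℝ D) : Prop :=
  DirectSum.IsInternal comp ∧ (1 : D) ∈ comp 1 ∧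
    (∀ (g h : G) (a b : D), a ∈ comp g → b ∈ comp h → a * b ∈ comp (g * h)) ∧
    ∀ (g : G) (a : D), a ∈ comp g → a ≠ 0 → IsUnit a

/-!
Suppose `t² = f` for some `t ∈ T`, and let `x` be a nonzero central element of degree `f`, so that
`Z(D) = ℝ ⊕ ℝx`. As `φ₀` is of the second kind, it acts on `Z(D)` by `x ↦ -x`; hence
`d = X_t² x⁻¹ ∈ D_e` satisfies `φ₀ d = -d`. We show that `d` commutes with `D_e` and with every
`X_s`, so `d` is central of degree `e`, i.e. real, and then `φ₀ d = d` forces `d = 0`.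
If `D_e` is noncommutative, the `X_s` centralize `D_e ∋ d`. If `D_e` is commutative, any two
`φ₀`-skew elements of `D_e` have a real product; applied to `d` and `X_r² x⁻¹` for another square
root `r` of `f`, this shows that `X_r` commutes with `d`. Every other `s ∈ T` has `s² = e`, so `ts`
is a square root of `f` and `X_s ∈ X_t⁻¹ D_e X_{ts}`.
-/
theorem Submodule.eq_span_pair_of_finrank_le_two {K V : Type*} [Field K] [AddCommGroup V]
    [Module K V] {S : Submodule K V} [FiniteDimensional K S] (hS : Module.finrank K S ≤ 2)
    {v w : V} (hv : v ∈ S) (hw : w ∈ S) (hind : LinearIndependent K ![v, w]) :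
    S = Submodule.span K {v, w} := by
  refine (Submodule.eq_of_le_of_finrank_le ?_ ?_).symm
  · rw [Submodule.span_le]
    rintro y (rfl | rfl) <;> assumption
  · have := finrank_span_eq_card hind
    rw [Matrix.range_cons, Matrix.range_cons, Matrix.range_empty, Set.union_empty,
      Set.singleton_union] at this
    simpa [this] using hS

theorem Subalgebra.finiteDimensional_center_and_finrank_le_two {A : Type*} [Ring A] [Algebra ℝ A]
    (hZ : Nonempty (↥(Subalgebra.center ℝ A) ≃ₐ[ℝ] ℝ) ∨
      Nonempty (↥(Subalgebra.center ℝ A) ≃ₐ[ℝ] ℂ) ∨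
      Nonempty (↥(Subalgebra.center ℝ A) ≃ₐ[ℝ] (ℝ × ℝ))) :
    FiniteDimensional ℝ (Subalgebra.center ℝ A) ∧
      Module.finrank ℝ (Subalgebra.center ℝ A) ≤ 2 := by
  rcases hZ with ⟨⟨e⟩⟩ | ⟨⟨e⟩⟩ | ⟨⟨e⟩⟩ <;>
    exact ⟨e.toLinearEquiv.symm.finiteDimensional, by simp [e.toLinearEquiv.finrank_eq]⟩

section AntiInvolution

variable {A : Type*} [Ring A]

theorem map_one_of_anti_involutive {φ : A → A} (hanti : ∀ x y, φ (x * y) = φ y * φ x)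
    (hinvol : ∀ x, φ (φ x) = x) : φ 1 = 1 := by
  simpa [hinvol] using (hanti (φ 1) 1).symm

theorem map_units_inv_of_map_eq_neg {φ : A → A} (hanti : ∀ x y, φ (x * y) = φ y * φ x)
    (hinvol : ∀ x, φ (φ x) = x) {u : Aˣ} (hu : φ u = -u) : φ ↑u⁻¹ = -↑u⁻¹ := by
  have h : φ ↑u⁻¹ * -(u : A) = 1 := by
    rw [← hu, ← hanti, Units.mul_inv, map_one_of_anti_involutive hanti hinvol]
  calc φ ↑u⁻¹ = φ ↑u⁻¹ * -(u : A) * -↑u⁻¹ := by simp [mul_assoc]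
    _ = -↑u⁻¹ := by rw [h, one_mul]

variable [Algebra ℝ A]

theorem map_mem_center_of_anti_involutive {φ : A → A} (hanti : ∀ x y, φ (x * y) = φ y * φ x)
    (hinvol : ∀ x, φ (φ x) = x) {z : A} (hz : z ∈ Subalgebra.center ℝ A) :
    φ z ∈ Subalgebra.center ℝ A := by
  rw [Subalgebra.mem_center_iff] at hz ⊢
  intro b
  rw [← hinvol b, ← hanti, ← hz, hanti]

theorem Commute.of_mul_eq_algebraMap {w d : A} {v : Aˣ} (hwv : Commute w v) {c : ℝ}
    (hc : v * d = algebraMap ℝ A c) : Commute w d := by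
  have hd : d = ↑v⁻¹ * algebraMap ℝ A c := by rw [← hc, Units.inv_mul_cancel_left]
  exact hd ▸ hwv.units_inv_right.mul_right (Algebra.commutes c w).symm

theorem map_mul_self_of_map_eq_smul (φ : A ≃ₗ[ℝ] A) (hanti : ∀ x y : A, φ (x * y) = φ y * φ x)
    {v : A} {ε : ℝ} (hε : ε = 1 ∨ ε = -1) (hv : φ v = ε • v) : φ (v * v) = v * v := by
  rcases hε with rfl | rfl <;> simp [hanti, hv]

theorem map_mul_units_inv_of_map_eq_neg (φ : A ≃ₗ[ℝ] A)
    (hanti : ∀ x y : A, φ (x * y) = φ y * φ x) (hinvol : ∀ x : A, φ (φ x) = x)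
    {w : A} (hw : φ w = w) {u : Aˣ} (hu : φ u = -u) (huZ : ∀ y, Commute (↑u⁻¹ : A) y) :
    φ (w * ↑u⁻¹) = -(w * ↑u⁻¹) := by
  rw [hanti, hw, map_units_inv_of_map_eq_neg hanti hinvol hu, neg_mul, (huZ w).eq]

theorem exists_mul_eq_algebraMap_of_map_eq_neg (φ : A ≃ₗ[ℝ] A)
    (hanti : ∀ x y : A, φ (x * y) = φ y * φ x) {a b : A} (hab : Commute a b)
    (ha : φ a = -a) (hb : φ b = -b) (htr : ∃ r : ℝ, a * b + φ (a * b) = algebraMap ℝ A r) :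
    ∃ c : ℝ, a * b = algebraMap ℝ A c := by
  obtain ⟨r, hr⟩ := htr
  have hsym : φ (a * b) = a * b := by rw [hanti, ha, hb, neg_mul_neg, hab.eq]
  refine ⟨r / 2, ?_⟩
  rw [hsym, ← two_smul ℝ] at hr
  rw [div_eq_inv_mul, map_mul, ← hr, Algebra.algebraMap_eq_smul_one, smul_mul_assoc, one_mul,
    smul_smul]
  norm_num

end AntiInvolution

namespace IsGDA

variable {comp : G → Submodule ℝ D}

theorem isInternal (hgda : IsGDA comp) : DirectSum.IsInternal comp := hgda.1

theorem one_mem (hgda : IsGDA comp) : (1 : D) ∈ comp 1 := hgda.2.1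

theorem mul_mem (hgda : IsGDA comp) {g h : G} {a b : D} (ha : a ∈ comp g) (hb : b ∈ comp h) :
    a * b ∈ comp (g * h) :=
  hgda.2.2.1 g h a b ha hb

theorem isUnit (hgda : IsGDA comp) {g : G} {a : D} (ha : a ∈ comp g) (h0 : a ≠ 0) : IsUnit a :=
  hgda.2.2.2 g a ha h0

theorem eq_zero_of_mem_of_mem (hgda : IsGDA comp) {g h : G} (hgh : g ≠ h) {a : D}
    (hg : a ∈ comp g) (hh : a ∈ comp h) : a = 0 :=
  (Submodule.disjoint_def.mp (hgda.isInternal.submodule_iSupIndep.pairwiseDisjoint hgh)) a hg hh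

theorem decompose_mul_of_left_mem [DirectSum.Decomposition comp] (hgda : IsGDA comp)
    {g : G} {a : D} (ha : a ∈ comp g) (y : D) (k : G) :
    (DirectSum.decompose comp (a * y) (g * k) : D) = a * DirectSum.decompose comp y k := by
  induction y using DirectSum.Decomposition.inductionOn comp with
  | zero => simp
  | @homogeneous i y =>
    have hay := hgda.mul_mem ha y.2
    by_cases hk : i = k
    · subst hk
      rw [DirectSum.decompose_of_mem_same _ hay, DirectSum.decompose_coe, DirectSum.of_eq_same]
    · rw [DirectSum.decompose_of_mem_ne _ hay (by simpa using hk),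
        DirectSum.decompose_of_mem_ne _ y.2 hk, mul_zero]
  | add y y' hy hy' => simp only [mul_add, DirectSum.decompose_add, DirectSum.add_apply,
      Submodule.coe_add, hy, hy']

theorem units_inv_mem (hgda : IsGDA comp) {g : G} {u : Dˣ} (hu : (u : D) ∈ comp g) :
    ((u⁻¹ : Dˣ) : D) ∈ comp g⁻¹ := by
  classical
  let := hgda.isInternal.chooseDecomposition
  have hcomp : ∀ h ≠ g⁻¹, (DirectSum.decompose comp ((u⁻¹ : Dˣ) : D) h : D) = 0 := by
    intro h hh
    have hgh : (1 : G) ≠ g * h := fun e => hh (eq_inv_of_mul_eq_one_right e.symm)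
    have key := hgda.decompose_mul_of_left_mem hu ((u⁻¹ : Dˣ) : D) h
    rw [Units.mul_inv, DirectSum.decompose_of_mem_ne _ hgda.one_mem hgh] at key
    simpa using (congrArg (((u⁻¹ : Dˣ) : D) * ·) key).symm
  rw [← DirectSum.sum_support_decompose comp ((u⁻¹ : Dˣ) : D)]
  refine Submodule.sum_mem _ fun h _ => ?_
  by_cases hh : h = g⁻¹
  · exact hh ▸ (DirectSum.decompose comp _ h).2
  · rw [hcomp h hh]; exact Submodule.zero_mem _

theorem mem_center_of_forall_commute (hgda : IsGDA comp) {d : D}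
    (hd : ∀ g, ∀ y ∈ comp g, Commute d y) : d ∈ Subalgebra.center ℝ D := by
  refine Subalgebra.mem_center_iff.mpr fun y => ?_
  have hy : y ∈ ⨆ g, comp g := hgda.isInternal.submodule_iSup_eq_top ▸ Submodule.mem_top
  exact (Submodule.iSup_induction comp (motive := Commute d) hy hd (Commute.zero_right d)
    fun _ _ => Commute.add_right).symm.eq

theorem commute_of_mem (hgda : IsGDA comp) {d : D} (hd : ∀ z ∈ comp 1, Commute d z)
    {g : G} {u : Dˣ} (hu : (u : D) ∈ comp g) (hdu : Commute d u) {y : D} (hy : y ∈ comp g) :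
    Commute d y := by
  have hyu : y * ↑u⁻¹ ∈ comp 1 := by
    simpa using hgda.mul_mem hy (hgda.units_inv_mem hu)
  simpa using (hd _ hyu).mul_right hdu

theorem linearIndependent_one_of_mem (hgda : IsGDA comp) {f : G} (hf : f ≠ 1) {x : D}
    (hxf : x ∈ comp f) (hx0 : x ≠ 0) : LinearIndependent ℝ ![1, x] := by
  refine linearIndependent_fin2.mpr ⟨by simpa using hx0, fun a hax => ?_⟩
  simp only [Matrix.cons_val_one, Matrix.cons_val_zero] at hax
  have h1 : (1 : D) = 0 :=
    hgda.eq_zero_of_mem_of_mem hf (hax ▸ Submodule.smul_mem _ a hxf) hgda.one_mem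
  exact hx0 (by simpa using congrArg (x * ·) h1)

theorem exists_eq_smul_one_of_mem_center (hgda : IsGDA comp) {f : G} (hf : f ≠ 1) {x : D}
    (hxf : x ∈ comp f)
    (hZx : Subalgebra.toSubmodule (Subalgebra.center ℝ D) ≤ Submodule.span ℝ {1, x})
    {z : D} (hz : z ∈ Subalgebra.center ℝ D) (hz1 : z ∈ comp 1) : ∃ a : ℝ, z = a • 1 := by
  obtain ⟨a, b, rfl⟩ := Submodule.mem_span_pair.mp (hZx hz)
  have hb : b • x = 0 := hgda.eq_zero_of_mem_of_mem hf (Submodule.smul_mem _ b hxf)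
    (by simpa using Submodule.sub_mem _ hz1 (Submodule.smul_mem _ a hgda.one_mem))
  exact ⟨a, by rw [hb, add_zero]⟩

theorem exists_eq_smul_of_mem_center (hgda : IsGDA comp) {f : G} (hf : f ≠ 1) {x : D}
    (hxf : x ∈ comp f)
    (hZx : Subalgebra.toSubmodule (Subalgebra.center ℝ D) ≤ Submodule.span ℝ {1, x})
    {z : D} (hz : z ∈ Subalgebra.center ℝ D) (hzf : z ∈ comp f) : ∃ b : ℝ, z = b • x := by
  obtain ⟨a, b, rfl⟩ := Submodule.mem_span_pair.mp (hZx hz)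
  have ha : a • (1 : D) = 0 := hgda.eq_zero_of_mem_of_mem hf.symm
    (Submodule.smul_mem _ a hgda.one_mem)
    (by simpa using Submodule.sub_mem _ hzf (Submodule.smul_mem _ b hxf))
  exact ⟨b, by rw [ha, zero_add]⟩

theorem mul_self_eq_one_of_mem_center (hgda : IsGDA comp) {f : G} (hf : f ≠ 1) {x : D}
    (hx0 : x ≠ 0) (hxf : x ∈ comp f) (hxZ : ∀ y : D, x * y = y * x)
    (honly : ∀ g : G, g ≠ 1 → g ≠ f → ∀ x ∈ comp g, (∀ y : D, x * y = y * x) → x = 0) :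
    f * f = 1 := by
  have : Nontrivial D := ⟨⟨x, 0, hx0⟩⟩
  obtain ⟨u, rfl⟩ := hgda.isUnit hxf hx0
  by_contra hff
  refine (u * u).ne_zero (honly (f * f) hff (fun h => hf ?_) _ (hgda.mul_mem hxf hxf)
    fun y => ?_)
  · simpa using h
  · rw [Units.val_mul, mul_assoc, hxZ y, ← mul_assoc, hxZ y, mul_assoc]

theorem map_eq_neg_of_mem_center (hgda : IsGDA comp) {f : G} (hf : f ≠ 1) {x : D}
    (hx0 : x ≠ 0) (hxf : x ∈ comp f) (hxZ : x ∈ Subalgebra.center ℝ D)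
    (hZx : Subalgebra.toSubmodule (Subalgebra.center ℝ D) ≤ Submodule.span ℝ {1, x})
    (φ : D ≃ₗ[ℝ] D) (hanti : ∀ x y : D, φ (x * y) = φ y * φ x) (hinvol : ∀ x : D, φ (φ x) = x)
    (hgr : ∀ (g : G), ∀ x ∈ comp g, φ x ∈ comp g)
    (hkind : (¬∀ z ∈ Subalgebra.center ℝ D, ∃ r : ℝ, z = algebraMap ℝ D r) →
      ∃ z ∈ Subalgebra.center ℝ D, φ z ≠ z) :
    φ x = -x := by
  obtain ⟨c, hc⟩ := hgda.exists_eq_smul_of_mem_center hf hxf hZx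
    (map_mem_center_of_anti_involutive hanti hinvol hxZ) (hgr f x hxf)
  have hcc : c * c = 1 := by
    refine smul_left_injective ℝ hx0 ?_
    simpa [hc, smul_smul] using hinvol x
  rcases mul_self_eq_one_iff.mp hcc with rfl | rfl
  · obtain ⟨z, hz, hφz⟩ := hkind fun h => by
      obtain ⟨r, rfl⟩ := h x hxZ
      exact hx0 (hgda.eq_zero_of_mem_of_mem hf hxf
        (by simpa [Algebra.algebraMap_eq_smul_one] using Submodule.smul_mem _ r hgda.one_mem))
    obtain ⟨a, b, rfl⟩ := Submodule.mem_span_pair.mp (hZx hz)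
    simp [map_one_of_anti_involutive hanti hinvol, hc] at hφz
  · simpa using hc

theorem commute_X_of_forall_commute_one (hgda : IsGDA comp) {T : Subgroup G} (X : ↥T → Dˣ)
    (hX : ∀ t : ↥T, (X t : D) ∈ comp (t : G))
    (hcomm : ∀ z ∈ comp (1 : G), ∀ w ∈ comp (1 : G), z * w = w * z)
    (φ : D ≃ₗ[ℝ] D) (hanti : ∀ x y : D, φ (x * y) = φ y * φ x)
    (htr : ∀ z ∈ comp (1 : G), ∃ r : ℝ, z + φ z = algebraMap ℝ D r)
    {f : G} {u : Dˣ} (huZ : ∀ y, Commute (↑u⁻¹ : D) y)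
    (hskew : ∀ r : ↥T, (r : G) * r = f →
      ((X r * X r * u⁻¹ : Dˣ) : D) ∈ comp 1 ∧
        φ (X r * X r * u⁻¹ : Dˣ) = -((X r * X r * u⁻¹ : Dˣ) : D))
    (hroots : ∀ s : ↥T, (s : G) * s = 1 ∨ (s : G) * s = f) {t : ↥T} (ht : (t : G) * t = f) :
    ∀ s : ↥T, Commute ((X t * X t * u⁻¹ : Dˣ) : D) (X s) := by
  obtain ⟨hd1, hdφ⟩ := hskew t ht
  have hroot : ∀ r : ↥T, (r : G) * r = f → Commute ((X t * X t * u⁻¹ : Dˣ) : D) (X r) := by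
    intro r hr
    obtain ⟨hr1, hrφ⟩ := hskew r hr
    obtain ⟨c, hc⟩ := exists_mul_eq_algebraMap_of_map_eq_neg φ hanti (hcomm _ hr1 _ hd1) hrφ hdφ
      (htr _ (by simpa using hgda.mul_mem hr1 hd1))
    have hXr : Commute (X r : D) (X r * X r * u⁻¹ : Dˣ) := by
      simpa using ((Commute.refl _).mul_right (Commute.refl _)).mul_right (huZ _).symm
    exact (hXr.of_mul_eq_algebraMap hc).symm
  intro s
  rcases hroots s with hs | hs
  · have hts : ((t * s : ↥T) : G) * (t * s : ↥T) = f := by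
      rw [Subgroup.coe_mul, mul_mul_mul_comm, ht, hs, mul_one]
    have hmid : (X t : D) * X s * ↑(X (t * s))⁻¹ ∈ comp 1 := by
      simpa using hgda.mul_mem (hgda.mul_mem (hX t) (hX s))
        (hgda.units_inv_mem (hX (t * s)))
    have hXs : (X s : D) = ↑(X t)⁻¹ * ((X t : D) * X s * ↑(X (t * s))⁻¹) * X (t * s) := by
      simp [mul_assoc]
    rw [hXs]
    exact ((hroot t ht).units_inv_right.mul_right (hcomm _ hd1 _ hmid)).mul_right
      (hroot _ hts)
  · exact hroot s hs

theorem not_exists_mul_self_eq (hgda : IsGDA comp)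
    {T : Subgroup G} (hT : ∀ g : G, comp g ≠ ⊥ ↔ g ∈ T)
    (X : ↥T → Dˣ) (hX : ∀ t : ↥T, (X t : D) ∈ comp (t : G))
    (hXcent : ¬(∀ z ∈ comp (1 : G), ∀ w ∈ comp (1 : G), z * w = w * z) →
      ∀ (t : ↥T), ∀ z ∈ comp (1 : G), (X t : D) * z = z * (X t : D))
    (φ : D ≃ₗ[ℝ] D) (hanti : ∀ x y : D, φ (x * y) = φ y * φ x) (hinvol : ∀ x : D, φ (φ x) = x)
    (hgr : ∀ (g : G), ∀ x ∈ comp g, φ x ∈ comp g)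
    (htr : ∀ z ∈ comp (1 : G), ∃ r : ℝ, z + φ z = algebraMap ℝ D r)
    {η : ↥T → ℝ} (hη : ∀ t : ↥T, η t = 1 ∨ η t = -1)
    (hφX : ∀ t : ↥T, φ (X t : D) = η t • (X t : D))
    (hZ : Nonempty (↥(Subalgebra.center ℝ D) ≃ₐ[ℝ] ℝ) ∨
      Nonempty (↥(Subalgebra.center ℝ D) ≃ₐ[ℝ] ℂ) ∨
      Nonempty (↥(Subalgebra.center ℝ D) ≃ₐ[ℝ] (ℝ × ℝ)))
    (hkind : (¬∀ z ∈ Subalgebra.center ℝ D, ∃ r : ℝ, z = algebraMap ℝ D r) →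
      ∃ z ∈ Subalgebra.center ℝ D, φ z ≠ z)
    {f : G} (hf : f ≠ 1) {x : D} (hx0 : x ≠ 0) (hxf : x ∈ comp f)
    (hxc : ∀ y : D, x * y = y * x)
    (honly : ∀ g : G, g ≠ 1 → g ≠ f → ∀ x ∈ comp g, (∀ y : D, x * y = y * x) → x = 0)
    (hroots : ∀ s : ↥T, (s : G) * s = 1 ∨ (s : G) * s = f) :
    ¬∃ t : ↥T, (t : G) * t = f := by
  rintro ⟨t, ht⟩
  have : Nontrivial D := ⟨⟨x, 0, hx0⟩⟩
  have hff := hgda.mul_self_eq_one_of_mem_center hf hx0 hxf hxc honly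
  have hxZ : x ∈ Subalgebra.center ℝ D := Subalgebra.mem_center_iff.mpr fun b => (hxc b).symm
  obtain ⟨_, hrank⟩ := Subalgebra.finiteDimensional_center_and_finrank_le_two hZ
  have hZx := (Submodule.eq_span_pair_of_finrank_le_two
    (S := Subalgebra.toSubmodule (Subalgebra.center ℝ D)) hrank (Subalgebra.center ℝ D).one_mem
    hxZ (hgda.linearIndependent_one_of_mem hf hxf hx0)).le
  have hφx := hgda.map_eq_neg_of_mem_center hf hx0 hxf hxZ hZx φ hanti hinvol hgr hkind
  obtain ⟨u, rfl⟩ := hgda.isUnit hxf hx0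
  have huf : (↑u⁻¹ : D) ∈ comp f := by
    simpa [inv_eq_of_mul_eq_one_right hff] using hgda.units_inv_mem hxf
  have huZ : ∀ y, Commute (↑u⁻¹ : D) y := fun y => Commute.units_inv_left (hxc y)
  have hskew : ∀ r : ↥T, (r : G) * r = f →
      ((X r * X r * u⁻¹ : Dˣ) : D) ∈ comp 1 ∧
        φ (X r * X r * u⁻¹ : Dˣ) = -((X r * X r * u⁻¹ : Dˣ) : D) := fun r hr =>
    ⟨by simpa [hr, hff] using hgda.mul_mem (hgda.mul_mem (hX r) (hX r)) huf,
      by simpa using map_mul_units_inv_of_map_eq_neg φ hanti hinvol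
          (map_mul_self_of_map_eq_smul φ hanti (hη r) (hφX r)) hφx huZ⟩
  obtain ⟨hd1, hdφ⟩ := hskew t ht
  set d := ((X t * X t * u⁻¹ : Dˣ) : D) with hd
  have hdE : ∀ z ∈ comp 1, Commute d z := by
    by_cases hcomm : ∀ z ∈ comp (1 : G), ∀ w ∈ comp (1 : G), z * w = w * z
    · exact fun z hz => hcomm _ hd1 _ hz
    · intro z hz
      have hXz : Commute (X t : D) z := hXcent hcomm t z hz
      simpa [hd] using (hXz.mul_left hXz).mul_left (huZ z)
  have hdX : ∀ s : ↥T, Commute d (X s) := by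
    by_cases hcomm : ∀ z ∈ comp (1 : G), ∀ w ∈ comp (1 : G), z * w = w * z
    · exact hgda.commute_X_of_forall_commute_one X hX hcomm φ hanti htr huZ hskew hroots ht
    · exact fun s => (hXcent hcomm s d hd1).symm
  have hdZ : d ∈ Subalgebra.center ℝ D := hgda.mem_center_of_forall_commute fun g y hy => by
    by_cases hy0 : y = 0
    · exact hy0 ▸ Commute.zero_right d
    · have hg : g ∈ T := (hT g).mp fun h => hy0 (by simpa [h] using hy)
      exact hgda.commute_of_mem hdE (hX ⟨g, hg⟩) (hdX _) hy
  obtain ⟨a, ha⟩ := hgda.exists_eq_smul_one_of_mem_center hf hxf hZx hdZ hd1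
  have hφd : φ d = d := by rw [ha, map_smul, map_one_of_anti_involutive hanti hinvol]
  have hd2 : (2 : ℝ) • d = 0 := by
    rw [two_smul]
    exact eq_neg_iff_add_eq_zero.mp (hφd.symm.trans hdφ)
  exact (X t * X t * u⁻¹).ne_zero ((smul_eq_zero.mp hd2).resolve_left two_ne_zero)

end IsGDA

theorem stmt_13_general (comp : G → Submodule ℝ D) (hgda : IsGDA comp)
    (T : Subgroup G) (hT : ∀ g : G, comp g ≠ ⊥ ↔ g ∈ T)
    (X : ↥T → Dˣ) (hX : ∀ t : ↥T, (X t : D) ∈ comp (t : G))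
    -- when `D_e` is noncommutative the `X_t` are chosen in the centralizer of `D_e`
    (hXcent : ¬(∀ z ∈ comp (1 : G), ∀ w ∈ comp (1 : G), z * w = w * z) →
      ∀ (t : ↥T), ∀ z ∈ comp (1 : G), (X t : D) * z = z * (X t : D))
    (φ : D ≃ₗ[ℝ] D)
    (hanti : ∀ x y : D, φ (x * y) = φ y * φ x)
    (hinvol : ∀ x : D, φ (φ x) = x)
    (hgr : ∀ (g : G), ∀ x ∈ comp g, φ x ∈ comp g)
    (hconj : ∀ z ∈ comp (1 : G),
      (∃ r : ℝ, z + φ z = algebraMap ℝ D r) ∧ ∃ r : ℝ, 0 ≤ r ∧ z * φ z = algebraMap ℝ D r)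
    (η : ↥T → ℝ) (hη : ∀ t : ↥T, η t = 1 ∨ η t = -1)
    (hφX : ∀ t : ↥T, φ (X t : D) = η t • (X t : D))
    -- `Z(D)` is `ℝ`, `ℂ` or `ℝ × ℝ`
    (hZ : Nonempty (↥(Subalgebra.center ℝ D) ≃ₐ[ℝ] ℝ) ∨
      Nonempty (↥(Subalgebra.center ℝ D) ≃ₐ[ℝ] ℂ) ∨
      Nonempty (↥(Subalgebra.center ℝ D) ≃ₐ[ℝ] (ℝ × ℝ)))
    -- `φ₀` is of the second kind whenever `Z(D) ≠ ℝ`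
    (hkind : (¬∀ z ∈ Subalgebra.center ℝ D, ∃ r : ℝ, z = algebraMap ℝ D r) →
      ∃ z ∈ Subalgebra.center ℝ D, φ z ≠ z)
    -- `t² ∈ rad β = supp Z(D)` for all `t ∈ T`
    (hsq : ∀ t : ↥T, ∃ x : D, x ≠ 0 ∧ x ∈ comp ((t : G) * t) ∧ ∀ y : D, x * y = y * x) :
    -- Case A: `Z(D)` nontrivially graded with support `{e, f}`
    (∀ f : G, f ≠ 1 →
      (∃ x : D, x ≠ 0 ∧ x ∈ comp f ∧ ∀ y : D, x * y = y * x) →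
      (∀ g : G, g ≠ 1 → g ≠ f → ∀ x ∈ comp g, (∀ y : D, x * y = y * x) → x = 0) →
      ((¬∃ t : ↥T, (t : G) * t = f) ∧ ∀ t : ↥T, (t : G) * t = 1)) ∧
    -- Case B: `Z(D) = ℝ` trivially graded
    ((∀ g : G, g ≠ 1 → ∀ x ∈ comp g, (∀ y : D, x * y = y * x) → x = 0) →
      ∀ t : ↥T, (t : G) * t = 1) := by
  refine ⟨fun f hf ⟨x, hx0, hxf, hxc⟩ honly => ?_, fun honly t => ?_⟩
  · have hroots : ∀ s : ↥T, (s : G) * s = 1 ∨ (s : G) * s = f := fun s => by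
      obtain ⟨y, hy0, hy, hyc⟩ := hsq s
      by_contra! h
      exact hy0 (honly _ h.1 h.2 y hy hyc)
    have hnot := hgda.not_exists_mul_self_eq hT X hX hXcent φ hanti hinvol hgr
      (fun z hz => (hconj z hz).1) hη hφX hZ hkind hf hx0 hxf hxc honly hroots
    exact ⟨hnot, fun s => (hroots s).resolve_right fun h => hnot ⟨s, h⟩⟩
  · obtain ⟨y, hy0, hy, hyc⟩ := hsq t
    by_contra h
    exact hy0 (honly _ h y hy hyc)

/-- For a finite-dimensional real graded division algebra `D` with a
degree-preserving involution `φ₀` (of the second kind on the center whenever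
`Z(D) ≠ ℝ`) whose center is `ℝ`, `ℂ` or `ℝ × ℝ`:
if the center is nontrivially graded with support `{e, f}`, then the
distinguished element `f` is not a square in `T` and consequently `T` is an
elementary abelian 2-group; the same conclusion holds when `Z(D) = ℝ` is
trivially graded. -/
theorem stmt_13 (comp : G → Submodule ℝ D) (hgda : IsGDA comp)
    (hfdD : FiniteDimensional ℝ D)
    (T : Subgroup G) (hT : ∀ g : G, comp g ≠ ⊥ ↔ g ∈ T)
    (X : ↥T → Dˣ) (hX : ∀ t : ↥T, (X t : D) ∈ comp (t : G))
    -- when `D_e` is noncommutative the `X_t` are chosen in the centralizer of `D_e`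
    (hXcent : ¬(∀ z ∈ comp (1 : G), ∀ w ∈ comp (1 : G), z * w = w * z) →
      ∀ (t : ↥T), ∀ z ∈ comp (1 : G), (X t : D) * z = z * (X t : D))
    (φ : D ≃ₗ[ℝ] D)
    (hanti : ∀ x y : D, φ (x * y) = φ y * φ x)
    (hinvol : ∀ x : D, φ (φ x) = x)
    (hgr : ∀ (g : G), ∀ x ∈ comp g, φ x ∈ comp g)
    (hconj : ∀ z ∈ comp (1 : G),
      (∃ r : ℝ, z + φ z = algebraMap ℝ D r) ∧ ∃ r : ℝ, 0 ≤ r ∧ z * φ z = algebraMap ℝ D r)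
    (η : ↥T → ℝ) (hη : ∀ t : ↥T, η t = 1 ∨ η t = -1)
    (hφX : ∀ t : ↥T, φ (X t : D) = η t • (X t : D))
    -- `Z(D)` is `ℝ`, `ℂ` or `ℝ × ℝ`
    (hZ : Nonempty (↥(Subalgebra.center ℝ D) ≃ₐ[ℝ] ℝ) ∨
      Nonempty (↥(Subalgebra.center ℝ D) ≃ₐ[ℝ] ℂ) ∨
      Nonempty (↥(Subalgebra.center ℝ D) ≃ₐ[ℝ] (ℝ × ℝ)))
    -- `φ₀` is of the second kind whenever `Z(D) ≠ ℝ`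
    (hkind : (¬∀ z ∈ Subalgebra.center ℝ D, ∃ r : ℝ, z = algebraMap ℝ D r) →
      ∃ z ∈ Subalgebra.center ℝ D, φ z ≠ z)
    -- `t² ∈ rad β = supp Z(D)` for all `t ∈ T`
    (hsq : ∀ t : ↥T, ∃ x : D, x ≠ 0 ∧ x ∈ comp ((t : G) * t) ∧ ∀ y : D, x * y = y * x) :
    -- Case A: `Z(D)` nontrivially graded with support `{e, f}`
    (∀ f : G, f ≠ 1 →
      (∃ x : D, x ≠ 0 ∧ x ∈ comp f ∧ ∀ y : D, x * y = y * x) →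
      (∀ g : G, g ≠ 1 → g ≠ f → ∀ x ∈ comp g, (∀ y : D, x * y = y * x) → x = 0) →
      ((¬∃ t : ↥T, (t : G) * t = f) ∧ ∀ t : ↥T, (t : G) * t = 1)) ∧
    -- Case B: `Z(D) = ℝ` trivially graded
    ((∀ g : G, g ≠ 1 → ∀ x ∈ comp g, (∀ y : D, x * y = y * x) → x = 0) →
      ∀ t : ↥T, (t : G) * t = 1) :=
  stmt_13_general comp hgda T hT X hX hXcent φ hanti hinvol hgr hconj η hη hφX hZ hkind hsq
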